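/- arXiv:2301.09028 — 4 statements merged into one kernel-verified Lean document; each statement's English description precedes it below -/
import Mathlib

section
/- For any DAG D and natural number k, the k-closure graph cl_k(D) contains no directed cycles and no almost directed cycles (a directed path from a to b together with a bidirected edge a↔b). -/
/-- A mixed graph: directed edges `dir` and bidirected edges `bi`. -/
structure MixedGraph (V : Type) where
  dir : V → V → Prop
  bi : V → V → Prop

namespace MixedGraph

variable {V : Type} (G : MixedGraph V)

/-- symmetric view of bidirected adjacency -/
def biAdj (a b : V) : Prop := G.bi a b ∨ G.bi b a

/-- `step G u v hu hv` : an edge between `u` and `v` with arrowhead-at-`u` = `hu`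
and arrowhead-at-`v` = `hv`. -/
def step (u v : V) (hu hv : Bool) : Prop :=
  (hu = false ∧ hv = true ∧ G.dir u v) ∨
  (hu = true ∧ hv = false ∧ G.dir v u) ∨
  (hu = true ∧ hv = true ∧ G.biAdj u v)

/-- Walks in a mixed graph, recording the arrowhead marks of each traversed edge. -/
inductive Walk : V → V → Type _
  | nil (v : V) : Walk v v
  | cons {u v w : V} (hu hv : Bool) (h : G.step u v hu hv) (p : Walk v w) : Walk u w

variable {G}

def Walk.support : ∀ {a b : V}, G.Walk a b → List V
  | _, _, .nil v => [v]
  | _, _, .cons (u := u) _ _ _ p => u :: p.support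

/-- List of internal vertices together with the two arrowhead marks adjacent to them
(incoming mark, outgoing mark): a vertex is a collider iff both are `true`. -/
def Walk.marksInternal : ∀ {a b : V}, G.Walk a b → List (V × Bool × Bool)
  | _, _, .nil _ => []
  | _, _, .cons _ hv _ q =>
    match q with
    | .nil _ => []
    | .cons (u := m) hu' _ _ _ => (m, hv, hu') :: q.marksInternal

/-- The arrowhead mark at the first vertex of a walk (if nonempty). -/
def Walk.firstHead : ∀ {a b : V}, G.Walk a b → Option Bool
  | _, _, .nil _ => none
  | _, _, .cons hu _ _ _ => some hu

/-- The arrowhead mark at the last vertex of a walk (if nonempty). -/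
def Walk.lastHead : ∀ {a b : V}, G.Walk a b → Option Bool
  | _, _, .nil _ => none
  | _, _, .cons _ hv _ q =>
    match q with
    | .nil _ => some hv
    | .cons _ _ _ _ => q.lastHead

variable (G)

/-- Ancestorship in a mixed graph: directed edges only (reflexive). -/
def Anc (a b : V) : Prop := Relation.ReflTransGen G.dir a b

variable {G}

/-- A walk is d-connecting given `c` iff every collider on it is an ancestor of some
node of `c` and every non-collider is not in `c`. -/
def Walk.DConnecting (c : Set V) {a b : V} (w : G.Walk a b) : Prop :=
  ∀ m ∈ w.marksInternal,
    ((m.2.1 = true ∧ m.2.2 = true) → ∃ x ∈ c, G.Anc m.1 x) ∧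
    (¬ (m.2.1 = true ∧ m.2.2 = true) → m.1 ∉ c)

/-- A walk is active given `c` iff every collider on it is in `c` and every
non-collider is not in `c`. -/
def Walk.Active (c : Set V) {a b : V} (w : G.Walk a b) : Prop :=
  ∀ m ∈ w.marksInternal,
    ((m.2.1 = true ∧ m.2.2 = true) → m.1 ∈ c) ∧
    (¬ (m.2.1 = true ∧ m.2.2 = true) → m.1 ∉ c)

/-- A path is a walk without repeated vertices. -/
def Walk.IsPath {a b : V} (w : G.Walk a b) : Prop := w.support.Nodup

variable (G)

/-- d-connection: existence of a d-connecting path. -/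
def DConn (c : Set V) (a b : V) : Prop :=
  ∃ w : G.Walk a b, w.IsPath ∧ w.DConnecting c

/-- d-separation (m-separation in mixed graphs). -/
def DSep (c : Set V) (a b : V) : Prop := ¬ G.DConn c a b

/-- Adjacency in a mixed graph. -/
def Adj (a b : V) : Prop := G.dir a b ∨ G.dir b a ∨ G.biAdj a b

end MixedGraph

/-- View a directed graph as a mixed graph with no bidirected edges. -/
def ofDAG {V : Type} (E : V → V → Prop) : MixedGraph V := ⟨E, fun _ _ => False⟩

/-- Acyclicity of a directed graph. -/
def Acyclic {V : Type} (E : V → V → Prop) : Prop := ∀ a, ¬ Relation.TransGen E a a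

/-- `a, b` are `k`-covered in `E`: no conditioning set of size at most `k` d-separates them. -/
def KCovered {V : Type} (E : V → V → Prop) (k : ℕ) (a b : V) : Prop :=
  ∀ c : Finset V, c.card ≤ k → ¬ (ofDAG E).DSep (↑c) a b

/-- The `k`-closure of a DAG: every `k`-covered pair is adjacent, oriented by
ancestrality in `E`, bidirected when neither endpoint is an ancestor of the other. -/
def kClosure {V : Type} (E : V → V → Prop) (k : ℕ) : MixedGraph V where
  dir a b := KCovered E k a b ∧ Relation.TransGen E a b
  bi a b := KCovered E k a b ∧ KCovered E k b a ∧
    ¬ Relation.ReflTransGen E a b ∧ ¬ Relation.ReflTransGen E b a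

/-- Maximal ancestral graph: no directed cycles, no almost directed cycles,
and every non-adjacent pair of distinct nodes is d-separable. -/
def IsMAG {V : Type} (G : MixedGraph V) : Prop :=
  (∀ a, ¬ Relation.TransGen G.dir a a) ∧
  (∀ a b, Relation.TransGen G.dir a b → ¬ G.biAdj a b) ∧
  (∀ a b, a ≠ b → ¬ G.Adj a b → ∃ S : Set V, G.DSep S a b)

/-- k-Markov equivalence of two directed graphs. -/
def kMarkovEquiv {V : Type} (E₁ E₂ : V → V → Prop) (k : ℕ) : Prop :=
  ∀ a b, ∀ c : Finset V, c.card ≤ k →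
    ((ofDAG E₁).DSep (↑c) a b ↔ (ofDAG E₂).DSep (↑c) a b)

/-- Markov equivalence of two mixed graphs. -/
def MarkovEquiv {V : Type} (G₁ G₂ : MixedGraph V) : Prop :=
  ∀ a b, ∀ c : Set V, G₁.DSep c a b ↔ G₂.DSep c a b

theorem transGen_of_transGen_kClosure_dir {V : Type} {E : V → V → Prop} {k : ℕ} {a b : V}
    (h : Relation.TransGen (kClosure E k).dir a b) : Relation.TransGen E a b :=
  Relation.TransGen.closed (fun _ _ hab => hab.2) a b h

theorem not_kClosure_biAdj_of_reflTransGen {V : Type} {E : V → V → Prop} {k : ℕ} {a b : V}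
    (h : Relation.ReflTransGen E a b) : ¬ (kClosure E k).biAdj a b := by
  rintro (⟨-, -, hab, -⟩ | ⟨-, -, -, hab⟩) <;> exact hab h

/-- the `k`-closure of a DAG has no directed cycles and no almost
directed cycles. -/
theorem kClosure_no_cycles {V : Type} (E : V → V → Prop) (hE : Acyclic E) (k : ℕ) :
    (∀ a, ¬ Relation.TransGen (kClosure E k).dir a a) ∧
    (∀ a b, Relation.TransGen (kClosure E k).dir a b → ¬ (kClosure E k).biAdj a b) :=
  ⟨fun a h => hE a (transGen_of_transGen_kClosure_dir h),
    fun _ _ h => not_kClosure_biAdj_of_reflTransGen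
      (transGen_of_transGen_kClosure_dir h).to_reflTransGen⟩
end

section
/- For any DAG D, any set of nodes c, and any node a: a is an ancestor of some node of c in the k-closure cl_k(D) if and only if a is an ancestor of some node of c in D. (The ancestor relation relative to any set is preserved by taking the k-closure.) -/
/-! Every edge `u → v` of `D` is `k`-covered, since nothing separates adjacent nodes: for `u = v`
the trivial walk connects them, otherwise the edge itself is a d-connecting path. So `D` embeds
into the directed part of `cl_k(D)`, whose edges are in turn directed paths of `D`; hence the two
ancestor relations coincide. -/

namespace MixedGraph

variable {V : Type} {G : MixedGraph V}

theorem dConn_self (c : Set V) (a : V) : G.DConn c a a :=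
  ⟨.nil a, List.nodup_singleton a, by simp [Walk.DConnecting, Walk.marksInternal]⟩

theorem dConn_of_dir {c : Set V} {u v : V} (h : G.dir u v) (huv : u ≠ v) : G.DConn c u v :=
  ⟨.cons false true (Or.inl ⟨rfl, rfl, h⟩) (.nil v), by simpa [Walk.IsPath, Walk.support],
    by simp [Walk.DConnecting, Walk.marksInternal]⟩

end MixedGraph

theorem kCovered_of_edge {V : Type} {E : V → V → Prop} (k : ℕ) {u v : V} (h : E u v) :
    KCovered E k u v := by
  intro c _ hsep
  apply hsep
  obtain rfl | huv := eq_or_ne u v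
  · exact MixedGraph.dConn_self _ u
  · exact MixedGraph.dConn_of_dir (G := ofDAG E) h huv

theorem kClosure_anc_iff {V : Type} {E : V → V → Prop} {k : ℕ} {a b : V} :
    (kClosure E k).Anc a b ↔ Relation.ReflTransGen E a b := by
  constructor
  · intro h
    rw [← Relation.reflTransGen_transGen]
    exact Relation.ReflTransGen.mono (fun _ _ huv => huv.2) _ _ h
  · exact Relation.ReflTransGen.mono (fun _ _ huv => ⟨kCovered_of_edge k huv, .single huv⟩) _ _

theorem kClosure_anc_set_general {V : Type} (E : V → V → Prop) (k : ℕ)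
    (c : Set V) (a : V) :
    (∃ x ∈ c, (kClosure E k).Anc a x) ↔ (∃ x ∈ c, Relation.ReflTransGen E a x) :=
  exists_congr fun _ => and_congr_right fun _ => kClosure_anc_iff

/-- `a` is an ancestor of some node of `c` in the `k`-closure iff it is
an ancestor of some node of `c` in the DAG. -/
theorem kClosure_anc_set {V : Type} (E : V → V → Prop) (hE : Acyclic E) (k : ℕ)
    (c : Set V) (a : V) :
    (∃ x ∈ c, (kClosure E k).Anc a x) ↔ (∃ x ∈ c, Relation.ReflTransGen E a x) :=
  kClosure_anc_set_general E k c a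
end

section
/- In a DAG, every active walk between two nodes a and b given a conditioning set c yields a d-connecting path between a and b given c. Concretely: if there is a walk from a to b on which every collider belongs to c and every non-collider does not belong to c, then there is a path from a to b on which every collider is an ancestor of some node of c and every non-collider is not in c. -/
section AuxDev

namespace MixedGraph

variable {V : Type} {G : MixedGraph V}

/-- concatenation of walks -/
def Walk.append : ∀ {a b d : V}, G.Walk a b → G.Walk b d → G.Walk a d
  | _, _, _, .nil _, q => q
  | _, _, _, .cons hu hv h p, q => .cons hu hv h (p.append q)

/-- number of edges of a walk -/
def Walk.length : ∀ {a b : V}, G.Walk a b → ℕ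
  | _, _, .nil _ => 0
  | _, _, .cons _ _ _ p => p.length + 1

/-- marks of all vertices except the last one; the first vertex gets virtual
in-mark `h`. -/
def Walk.marksAux : ∀ {a b : V}, G.Walk a b → Bool → List (V × Bool × Bool)
  | _, _, .nil _, _ => []
  | _, _, .cons (u := u) hu hv _ p, h => (u, h, hu) :: p.marksAux hv

/-- in-mark at the last vertex, with default `h` for the empty walk. -/
def Walk.endMark : ∀ {a b : V}, G.Walk a b → Bool → Bool
  | _, _, .nil _, h => h
  | _, _, .cons _ hv _ p, _ => p.endMark hv

@[simp] lemma Walk.append_nil_left {b d : V} (q : G.Walk b d) :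
    (Walk.nil b).append q = q := rfl

@[simp] lemma Walk.append_cons {u v b d : V} (hu hv : Bool) (h : G.step u v hu hv)
    (p : G.Walk v b) (q : G.Walk b d) :
    (Walk.cons hu hv h p).append q = Walk.cons hu hv h (p.append q) := rfl

@[simp] lemma Walk.length_nil {a : V} : (Walk.nil (G := G) a).length = 0 := rfl

@[simp] lemma Walk.length_cons {u v b : V} (hu hv : Bool) (h : G.step u v hu hv)
    (p : G.Walk v b) : (Walk.cons hu hv h p).length = p.length + 1 := rfl

@[simp] lemma Walk.length_append : ∀ {a b d : V} (p : G.Walk a b) (q : G.Walk b d),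
    (p.append q).length = p.length + q.length
  | _, _, _, .nil _, q => (Nat.zero_add _).symm
  | _, _, _, .cons hu hv h p, q => by
      simp [Walk.append, Walk.length, Walk.length_append p q]; omega

@[simp] lemma Walk.marksAux_nil {a : V} (h : Bool) :
    (Walk.nil (G := G) a).marksAux h = [] := rfl

@[simp] lemma Walk.marksAux_cons {u v b : V} (hu hv : Bool) (e : G.step u v hu hv)
    (p : G.Walk v b) (h : Bool) :
    (Walk.cons hu hv e p).marksAux h = (u, h, hu) :: p.marksAux hv := rfl

@[simp] lemma Walk.endMark_nil {a : V} (h : Bool) :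
    (Walk.nil (G := G) a).endMark h = h := rfl

@[simp] lemma Walk.endMark_cons {u v b : V} (hu hv : Bool) (e : G.step u v hu hv)
    (p : G.Walk v b) (h : Bool) :
    (Walk.cons hu hv e p).endMark h = p.endMark hv := rfl

lemma Walk.marksInternal_eq_marksAux :
    ∀ {u v w : V} {hu hv : Bool} (h : G.step u v hu hv) (p : G.Walk v w),
      (Walk.cons hu hv h p).marksInternal = p.marksAux hv
  | _, _, _, _, _, h, .nil _ => rfl
  | _, _, _, _, _, h, .cons hu' hv' h' q => by
      show (_ :: (Walk.cons hu' hv' h' q).marksInternal) = _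
      rw [Walk.marksInternal_eq_marksAux h' q]
      rfl

lemma Walk.marksAux_append :
    ∀ {a b d : V} (p : G.Walk a b) (q : G.Walk b d) (h : Bool),
      (p.append q).marksAux h = p.marksAux h ++ q.marksAux (p.endMark h) := by
  intro a b d p
  induction p with
  | nil => intro q h; simp
  | cons hu hv e p' ih => intro q h; simp [ih]

lemma Walk.support_nil {a : V} : (Walk.nil (G := G) a).support = [a] := rfl

lemma Walk.support_cons {u v b : V} (hu hv : Bool) (e : G.step u v hu hv)
    (p : G.Walk v b) : (Walk.cons hu hv e p).support = u :: p.support := rfl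

/-- split a walk at an occurrence of a vertex -/
lemma Walk.exists_split :
    ∀ {a b : V} (w : G.Walk a b) (v : V), v ∈ w.support →
      ∃ (p : G.Walk a v) (q : G.Walk v b), w = p.append q := by
  intro a b w
  induction w with
  | nil u =>
      intro v hv
      rw [Walk.support_nil, List.mem_singleton] at hv
      subst hv
      exact ⟨Walk.nil v, Walk.nil v, rfl⟩
  | cons hu hv e p ih =>
      intro v hmem
      rw [Walk.support_cons, List.mem_cons] at hmem
      rcases hmem with h1 | h2
      · subst h1
        exact ⟨Walk.nil _, Walk.cons hu hv e p, rfl⟩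
      · obtain ⟨p₁, q₁, rfl⟩ := ih v h2
        exact ⟨Walk.cons hu hv e p₁, q₁, rfl⟩

/-- every walk whose support is not nodup contains a nontrivial loop -/
lemma Walk.exists_loop :
    ∀ {a b : V} (w : G.Walk a b), ¬ w.support.Nodup →
      ∃ (v : V) (p : G.Walk a v) (q : G.Walk v v) (r : G.Walk v b),
        w = p.append (q.append r) ∧ 1 ≤ q.length
  | _, _, .nil u, hn => absurd (by simp [Walk.support_nil]) hn
  | _, _, .cons (u := u) hu hv e p, hn => by
      rw [Walk.support_cons, List.nodup_cons] at hn
      by_cases hmem : u ∈ p.support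
      · obtain ⟨q', r, rfl⟩ := Walk.exists_split p u hmem
        refine ⟨u, Walk.nil u, Walk.cons hu hv e q', r, rfl, ?_⟩
        simp
      · have hnd : ¬ p.support.Nodup := fun h => hn ⟨hmem, h⟩
        obtain ⟨x, p₁, q₁, r₁, rfl, hq⟩ := Walk.exists_loop p hnd
        exact ⟨x, Walk.cons hu hv e p₁, q₁, r₁, rfl, hq⟩

lemma Walk.marksInternal_subset_marksAux {a b : V} (r : G.Walk a b) (h : Bool) :
    ∀ m ∈ r.marksInternal, m ∈ r.marksAux h := by
  cases r with
  | nil => intro m hm; exact absurd hm (by simp [Walk.marksInternal])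
  | cons hu hv e r' =>
      intro m hm
      rw [Walk.marksInternal_eq_marksAux] at hm
      rw [Walk.marksAux_cons]
      exact List.mem_cons_of_mem _ hm

end MixedGraph

end AuxDev

section DAGAux

open MixedGraph

variable {V : Type} {E : V → V → Prop} {c : Set V}

/-- the d-connecting condition at a single mark entry -/
def GoodMark (E : V → V → Prop) (c : Set V) (m : V × Bool × Bool) : Prop :=
  ((m.2.1 = true ∧ m.2.2 = true) → ∃ x ∈ c, (ofDAG E).Anc m.1 x) ∧
  (¬ (m.2.1 = true ∧ m.2.2 = true) → m.1 ∉ c)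

lemma step_ofDAG_iff {u v : V} {hu hv : Bool} :
    (ofDAG E).step u v hu hv ↔
      (hu = false ∧ hv = true ∧ E u v) ∨ (hu = true ∧ hv = false ∧ E v u) := by
  simp [MixedGraph.step, MixedGraph.biAdj, ofDAG]

/-- the backward-chain argument: if the in-mark at the end of a nonempty walk is
absent, then either the end vertex is an ancestor of the conditioning set, or
there is a directed path from the end back to the start (and the virtual start
out-mark is an arrowhead). -/
lemma chain_lemma (hE : Acyclic E) :
    ∀ (n : ℕ) {s v : V} (q : (ofDAG E).Walk s v) (h : Bool), q.length ≤ n →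
      1 ≤ q.length → (∀ m ∈ q.marksAux h, GoodMark E c m) → q.endMark h = false →
      (∃ x ∈ c, Relation.ReflTransGen E v x) ∨
        (Relation.TransGen E v s ∧ q.firstHead = some true) := by
  intro n
  induction n with
  | zero =>
      intro s v q h hlen hpos _ _
      omega
  | succ n ih =>
      intro s v q h hlen hpos hm hend
      cases q with
      | nil => simp [Walk.length] at hpos
      | @cons s s₁ v hu hv e q' =>
          cases q' with
          | nil =>
              -- single edge s — v with endMark = hv = false
              have hv0 : hv = false := by simpa [Walk.endMark] using hend
              subst hv0
              rcases step_ofDAG_iff.mp e with ⟨_, hvt, _⟩ | ⟨hut, _, hE'⟩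
              · exact absurd hvt (by simp)
              · subst hut
                exact Or.inr ⟨Relation.TransGen.single hE', rfl⟩
          | @cons s₁ s₂ v hu₂ hv₂ e₂ q'' =>
              have hlen' : (Walk.cons hu₂ hv₂ e₂ q'').length ≤ n := by
                have := hlen; simp [Walk.length] at this ⊢; omega
              have hm' : ∀ m ∈ (Walk.cons hu₂ hv₂ e₂ q'').marksAux hv,
                  GoodMark E c m := by
                intro m hmem
                exact hm m (by rw [Walk.marksAux_cons]; exact List.mem_cons_of_mem _ hmem)
              have hend' : (Walk.cons hu₂ hv₂ e₂ q'').endMark hv = false := by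
                simpa [Walk.endMark] using hend
              rcases ih (Walk.cons hu₂ hv₂ e₂ q'') hv hlen' (by simp [Walk.length]) hm' hend' with
                hl | ⟨htr, hfh⟩
              · exact Or.inl hl
              · have hu₂t : hu₂ = true := by
                  simpa [Walk.firstHead] using hfh
                have hmem : (s₁, hv, hu₂) ∈
                    (Walk.cons hu hv e (Walk.cons hu₂ hv₂ e₂ q'')).marksAux h := by
                  simp [Walk.marksAux_cons]
                have hgood := hm _ hmem
                subst hu₂t
                cases hv with
                | true =>
                    obtain ⟨x, hx, hanc⟩ := hgood.1 ⟨rfl, rfl⟩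
                    exact Or.inl ⟨x, hx, Relation.ReflTransGen.trans
                      htr.to_reflTransGen hanc⟩
                | false =>
                    rcases step_ofDAG_iff.mp e with ⟨_, hvt, _⟩ | ⟨hut, _, hE'⟩
                    · exact absurd hvt (by simp)
                    · subst hut
                      exact Or.inr ⟨htr.tail hE', rfl⟩

/-- the junction lemma: after splicing out a loop `q` at `v`, the new mark entry
at `v` is still good. -/
lemma junction_lemma (hE : Acyclic E) {v : V} (q : (ofDAG E).Walk v v)
    (hq : 1 ≤ q.length) {h₁ g₁ : Bool}
    (hm : ∀ m ∈ q.marksAux h₁, GoodMark E c m)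
    (hgood : GoodMark E c (v, q.endMark h₁, g₁)) :
    GoodMark E c (v, h₁, g₁) := by
  cases h₁ with
  | false =>
      -- v occurs as a non-collider at the start of q
      have hvnot : v ∉ c := by
        cases q with
        | nil => simp [Walk.length] at hq
        | cons j₁ j₂ e q' =>
            have hmem : (v, false, j₁) ∈
                (Walk.cons j₁ j₂ e q').marksAux false := by
              simp [Walk.marksAux_cons]
            exact (hm _ hmem).2 (by simp)
      exact ⟨fun hcol => absurd hcol.1 (by simp), fun _ => hvnot⟩
  | true =>
      cases hend : q.endMark true with
      | true => rw [hend] at hgood; exact hgood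
      | false =>
          cases g₁ with
          | false =>
              refine ⟨fun hcol => absurd hcol.2 (by simp), fun _ => ?_⟩
              rw [hend] at hgood
              exact hgood.2 (by simp)
          | true =>
              refine ⟨fun _ => ?_, fun hn => absurd ⟨rfl, rfl⟩ hn⟩
              rcases chain_lemma (c := c) hE q.length q true le_rfl hq hm hend with
                hl | ⟨htr, _⟩
              · exact hl
              · exact absurd htr (hE v)

/-- main induction: a walk whose marks are all good yields a d-connecting path. -/
lemma main_aux (hE : Acyclic E) :
    ∀ (n : ℕ) {a b : V} (w : (ofDAG E).Walk a b), w.length ≤ n →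
      (∀ m ∈ w.marksInternal, GoodMark E c m) →
      ∃ p : (ofDAG E).Walk a b, p.IsPath ∧ p.DConnecting c := by
  intro n
  induction n with
  | zero =>
      intro a b w hlen hm
      by_cases hnd : w.support.Nodup
      · exact ⟨w, hnd, hm⟩
      · obtain ⟨v, p, q, r, rfl, hq⟩ := Walk.exists_loop _ hnd
        have := Walk.length_append p (q.append r)
        have := Walk.length_append q r
        omega
  | succ n ih =>
      intro a b w hlen hm
      by_cases hnd : w.support.Nodup
      · exact ⟨w, hnd, hm⟩
      · obtain ⟨v, p, q, r, rfl, hq⟩ := Walk.exists_loop _ hnd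
        cases p with
        | nil =>
            -- spliced walk is r
            cases q with
            | nil => simp [Walk.length] at hq
            | @cons a v₁ v hu hv e q' =>
                have hmr : ∀ m ∈ r.marksInternal, GoodMark E c m := by
                  intro m hmem
                  apply hm
                  rw [Walk.append_nil_left, Walk.append_cons,
                    Walk.marksInternal_eq_marksAux, Walk.marksAux_append]
                  exact List.mem_append_right _
                    (Walk.marksInternal_subset_marksAux r _ m hmem)
                refine ih r ?_ hmr
                have h1 := Walk.length_append (Walk.nil a)
                  ((Walk.cons hu hv e q').append r)
                have h2 := Walk.length_append (Walk.cons hu hv e q') r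
                simp [Walk.length] at h1 h2 hlen ⊢
                omega
        | @cons a v₁ v pu pv pe p' =>
            -- spliced walk is (cons pu pv pe p').append r
            have hw : ((Walk.cons pu pv pe p').append (q.append r)).marksInternal =
                p'.marksAux pv ++ (q.marksAux (p'.endMark pv) ++
                  r.marksAux (q.endMark (p'.endMark pv))) := by
              rw [Walk.append_cons, Walk.marksInternal_eq_marksAux,
                Walk.marksAux_append, Walk.marksAux_append]
            have hm' : ∀ m ∈ ((Walk.cons pu pv pe p').append r).marksInternal,
                GoodMark E c m := by
              rw [Walk.append_cons, Walk.marksInternal_eq_marksAux, Walk.marksAux_append]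
              intro m hmem
              rcases List.mem_append.mp hmem with h1 | h2
              · exact hm m (by rw [hw]; exact List.mem_append_left _ h1)
              · -- m ∈ r.marksAux (p'.endMark pv)
                cases r with
                | nil => exact absurd h2 (by simp)
                | @cons v w₁ b g₁ g₂ f r' =>
                    rw [Walk.marksAux_cons] at h2
                    rcases List.mem_cons.mp h2 with rfl | h3
                    · -- junction entry
                      refine junction_lemma hE q hq ?_ ?_
                      · intro m' hmq
                        apply hm
                        rw [hw]
                        exact List.mem_append_right _ (List.mem_append_left _ hmq)
                      · apply hm
                        rw [hw]
                        refine List.mem_append_right _ (List.mem_append_right _ ?_)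
                        rw [Walk.marksAux_cons]
                        exact List.mem_cons_self
                    · apply hm
                      rw [hw]
                      refine List.mem_append_right _ (List.mem_append_right _ ?_)
                      rw [Walk.marksAux_cons]
                      exact List.mem_cons_of_mem _ h3
            refine ih _ ?_ hm'
            have h1 := Walk.length_append (Walk.cons pu pv pe p') (q.append r)
            have h2 := Walk.length_append q r
            have h3 := Walk.length_append (Walk.cons pu pv pe p') r
            omega

end DAGAux

/-- in a DAG, every active walk given `c` yields a d-connecting path
given `c` between the same endpoints. -/
theorem active_walk_to_dconnecting_path {V : Type} (E : V → V → Prop) (hE : Acyclic E)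
    (c : Set V) (a b : V) (w : (ofDAG E).Walk a b) (hw : w.Active c) :
    ∃ p : (ofDAG E).Walk a b, p.IsPath ∧ p.DConnecting c := by
  apply main_aux hE w.length w le_rfl
  intro m hm
  exact ⟨fun hcol => ⟨m.1, (hw m hm).1 hcol, Relation.ReflTransGen.refl⟩, (hw m hm).2⟩
end

section
/- Let D be a DAG in which X is not an ancestor of Y, Y is not an ancestor of X, X and Y are non-adjacent, and X,Y are k-covered (not d-separable by any conditioning set of size at most k). Then for every set T with |T| ≤ k, there exists a d-connecting path between X and Y given T whose first edge points into X and whose last edge points into Y. -/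
section AuxProof

open MixedGraph Relation

variable {V : Type} {E : V → V → Prop}

lemma ofDAG_step {u v : V} {hu hv : Bool} (h : (ofDAG E).step u v hu hv) :
    (hu = false ∧ hv = true ∧ E u v) ∨ (hu = true ∧ hv = false ∧ E v u) := by
  rcases h with h | h | h
  · exact Or.inl h
  · exact Or.inr h
  · rcases h.2.2 with h' | h' <;> exact h'.elim

lemma marks_cons_subset {G : MixedGraph V} {u v b : V} {hu hv : Bool}
    (h : G.step u v hu hv) (q : G.Walk v b) :
    ∀ z ∈ q.marksInternal, z ∈ (Walk.cons hu hv h q).marksInternal := by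
  cases q with
  | nil => simp [Walk.marksInternal]
  | cons hu' hv' h' q' =>
    intro z hz
    exact List.mem_cons_of_mem _ hz

lemma dconn_of_marks_subset {G : MixedGraph V} {c : Set V} {a b a' b' : V}
    {w : G.Walk a b} {w' : G.Walk a' b'} (h : w.DConnecting c)
    (hs : ∀ z ∈ w'.marksInternal, z ∈ w.marksInternal) : w'.DConnecting c :=
  fun m hm => h m (hs m hm)

/-- Forward chain lemma. -/
lemma forward_master {S : Set V} :
    ∀ {a b : V} (w : (ofDAG E).Walk a b), w.DConnecting S → w.firstHead = some false →
      Relation.TransGen E a b ∨ ∃ x ∈ S, Relation.TransGen E a x := by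
  intro a b w
  induction w with
  | nil v => intro _ h; simp [Walk.firstHead] at h
  | cons hu hv h q ih =>
    intro hdc hfh
    have hu0 : hu = false := by
      simpa [Walk.firstHead] using hfh
    subst hu0
    rcases ofDAG_step h with ⟨-, hv1, hEuv⟩ | ⟨hbad, -, -⟩
    · subst hv1
      cases q with
      | nil => exact Or.inl (Relation.TransGen.single hEuv)
      | cons hu' hv' h' q' =>
        cases hu' with
        | true =>
          have hm : (_, true, true) ∈ (Walk.cons false true h
              (Walk.cons true hv' h' q')).marksInternal := List.mem_cons_self
          obtain ⟨x, hxS, hxa⟩ := (hdc _ hm).1 ⟨rfl, rfl⟩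
          exact Or.inr ⟨x, hxS, Relation.TransGen.head' hEuv hxa⟩
        | false =>
          have hq : (Walk.cons (G := ofDAG E) false hv' h' q').DConnecting S :=
            dconn_of_marks_subset hdc (marks_cons_subset _ _)
          rcases ih hq rfl with h1 | ⟨x, hxS, h2⟩
          · exact Or.inl (Relation.TransGen.head hEuv h1)
          · exact Or.inr ⟨x, hxS, Relation.TransGen.head' hEuv h2.to_reflTransGen⟩
    · exact absurd hbad (by simp)

/-- Backward chain lemma. -/
lemma backward_master {S : Set V} :
    ∀ {a b : V} (w : (ofDAG E).Walk a b), w.DConnecting S → w.lastHead = some false →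
      (∃ x ∈ S, Relation.TransGen E b x) ∨
        (w.firstHead = some true ∧ Relation.TransGen E b a) := by
  intro a b w
  induction w with
  | nil v => intro _ h; simp [Walk.lastHead] at h
  | cons hu hv h q ih =>
    intro hdc hlh
    cases q with
    | nil =>
      have hv0 : hv = false := by
        simpa [Walk.lastHead] using hlh
      subst hv0
      rcases ofDAG_step h with ⟨-, hbad, -⟩ | ⟨hu1, -, hEba⟩
      · exact absurd hbad (by simp)
      · subst hu1
        exact Or.inr ⟨rfl, Relation.TransGen.single hEba⟩
    | cons hu' hv' h' q' =>
      have hq : (Walk.cons (G := ofDAG E) hu' hv' h' q').DConnecting S :=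
        dconn_of_marks_subset hdc (marks_cons_subset _ _)
      have hlh' : (Walk.cons (G := ofDAG E) hu' hv' h' q').lastHead = some false := hlh
      rcases ih hq hlh' with h1 | ⟨hfh, hTG⟩
      · exact Or.inl h1
      · have hu'1 : hu' = true := by
          simpa [Walk.firstHead] using hfh
        subst hu'1
        cases hv with
        | true =>
          have hm : (_, true, true) ∈ (Walk.cons hu true h
              (Walk.cons true hv' h' q')).marksInternal := List.mem_cons_self
          obtain ⟨x, hxS, hxa⟩ := (hdc _ hm).1 ⟨rfl, rfl⟩
          exact Or.inl ⟨x, hxS, hTG.trans_left hxa⟩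
        | false =>
          rcases ofDAG_step h with ⟨-, hbad, -⟩ | ⟨hu1, -, hEva⟩
          · exact absurd hbad (by simp)
          · subst hu1
            exact Or.inr ⟨rfl, hTG.tail hEva⟩

/-- Extract the suffix walk starting at an internal vertex. -/
lemma suffix_walk {G : MixedGraph V} :
    ∀ {a b : V} (w : G.Walk a b) (t : V) (α β : Bool),
      (t, α, β) ∈ w.marksInternal →
      ∃ w' : G.Walk t b, w'.firstHead = some β ∧
        ∀ z ∈ w'.marksInternal, z ∈ w.marksInternal := by
  intro a b w
  induction w with
  | nil v => intro t α β hm; simp [Walk.marksInternal] at hm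
  | cons hu hv h q ih =>
    intro t α β hm
    cases q with
    | nil => simp [Walk.marksInternal] at hm
    | cons hu' hv' h' q' =>
      rcases List.mem_cons.mp hm with heq | hmem
      · simp only [Prod.mk.injEq] at heq
        obtain ⟨rfl, rfl, rfl⟩ := heq
        exact ⟨Walk.cons _ _ h' q', rfl, marks_cons_subset _ _⟩
      · obtain ⟨w', hw1, hw2⟩ := ih t α β hmem
        exact ⟨w', hw1, fun z hz => marks_cons_subset _ _ z (hw2 z hz)⟩

lemma lastHead_cons_of_cons {G : MixedGraph V} {a v b : V} {hu hv : Bool}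
    {h : G.step a v hu hv} {q : G.Walk v b} (c : Bool) (hq : q.firstHead = some c) :
    (Walk.cons hu hv h q).lastHead = q.lastHead := by
  cases q with
  | nil => simp [Walk.firstHead] at hq
  | cons hu' hv' h' q' => rfl

/-- Extract the prefix walk ending at an internal vertex. -/
lemma prefix_walk {G : MixedGraph V} :
    ∀ {a b : V} (w : G.Walk a b) (t : V) (α β : Bool),
      (t, α, β) ∈ w.marksInternal →
      ∃ w' : G.Walk a t, w'.firstHead = w.firstHead ∧ w'.lastHead = some α ∧
        ∀ z ∈ w'.marksInternal, z ∈ w.marksInternal := by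
  intro a b w
  induction w with
  | nil v => intro t α β hm; simp [Walk.marksInternal] at hm
  | cons hu hv h q ih =>
    intro t α β hm
    cases q with
    | nil => simp [Walk.marksInternal] at hm
    | cons hu' hv' h' q' =>
      rcases List.mem_cons.mp hm with heq | hmem
      · simp only [Prod.mk.injEq] at heq
        obtain ⟨rfl, rfl, rfl⟩ := heq
        refine ⟨Walk.cons _ _ h (Walk.nil _), rfl, rfl, ?_⟩
        simp [Walk.marksInternal]
      · obtain ⟨q'', hq1, hq2, hq3⟩ := ih t α β hmem
        refine ⟨Walk.cons hu hv h q'', rfl, ?_, ?_⟩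
        · rw [lastHead_cons_of_cons hu' (by rw [hq1]; rfl)]
          exact hq2
        · -- marks of cons hu hv h q'' ⊆ marks of cons hu hv h (cons hu' hv' h' q')
          cases q'' with
          | nil => simp [Walk.firstHead] at hq1
          | cons hu2 hv2 h2 q2 =>
            have hu2e : hu2 = hu' := by
              have : some hu2 = some hu' := hq1
              exact Option.some.inj this
            subst hu2e
            intro z hz
            rcases List.mem_cons.mp hz with hzeq | hzmem
            · exact hzeq ▸ List.mem_cons_self
            · exact List.mem_cons_of_mem _ (hq3 z hzmem)

/-- A non-collider internal vertex of a d-connecting walk reaches an endpoint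
or the conditioning set by a directed path. -/
lemma internal_master {S : Set V} {a b : V} {w : (ofDAG E).Walk a b}
    (hw : w.DConnecting S) {t : V} {α β : Bool}
    (hm : (t, α, β) ∈ w.marksInternal) (hnc : ¬(α = true ∧ β = true)) :
    Relation.TransGen E t a ∨ Relation.TransGen E t b ∨
      ∃ x ∈ S, Relation.TransGen E t x := by
  cases β with
  | false =>
    obtain ⟨w', hw1, hw2⟩ := suffix_walk w t α false hm
    rcases forward_master w' (dconn_of_marks_subset hw hw2) hw1 with h1 | h2
    · exact Or.inr (Or.inl h1)
    · exact Or.inr (Or.inr h2)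
  | true =>
    cases α with
    | true => exact absurd ⟨rfl, rfl⟩ hnc
    | false =>
      obtain ⟨w', _, hw2, hw3⟩ := prefix_walk w t false true hm
      rcases backward_master w' (dconn_of_marks_subset hw hw3) hw2 with h1 | ⟨-, h2⟩
      · exact Or.inr (Or.inr h1)
      · exact Or.inl h2

lemma lastHead_isSome {G : MixedGraph V} :
    ∀ {a b : V} (w : G.Walk a b) (c : Bool), w.firstHead = some c →
      ∃ d, w.lastHead = some d := by
  intro a b w
  induction w with
  | nil v => intro c hc; simp [Walk.firstHead] at hc
  | cons hu hv h q ih =>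
    intro c _
    cases q with
    | nil => exact ⟨hv, rfl⟩
    | cons hu' hv' h' q' => exact ih hu' rfl

end AuxProof

/-- if `X` and `Y` are non-adjacent, non-ancestors of each other, and
`k`-covered, then given any `T` with `|T| ≤ k` there is a d-connecting path between
them with arrowheads at both `X` and `Y`. -/
theorem kcovered_bidirected_path {V : Type} (E : V → V → Prop) (hE : Acyclic E)
    (k : ℕ) (X Y : V)
    (hXY : ¬ Relation.ReflTransGen E X Y) (hYX : ¬ Relation.ReflTransGen E Y X)
    (hadj₁ : ¬ E X Y) (hadj₂ : ¬ E Y X) (hcov : KCovered E k X Y) :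
    ∀ T : Finset V, T.card ≤ k →
      ∃ p : (ofDAG E).Walk X Y, p.IsPath ∧ p.DConnecting (↑T) ∧
        p.firstHead = some true ∧ p.lastHead = some true := by
  classical
  have key : ∀ n (T : Finset V), T.card = n → T.card ≤ k →
      ∃ p : (ofDAG E).Walk X Y, p.IsPath ∧ p.DConnecting (↑T) ∧
        p.firstHead = some true ∧ p.lastHead = some true := by
    intro n
    induction n using Nat.strong_induction_on with
    | _ n ih =>
      intro T hTn hTk
      by_cases hc : ∃ t ∈ T, ¬ Relation.ReflTransGen E t X ∧ ¬ Relation.ReflTransGen E t Y ∧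
          ∀ x ∈ T.erase t, ¬ Relation.ReflTransGen E t x
      · obtain ⟨t, htT, htX, htY, htT'⟩ := hc
        have hlt : (T.erase t).card < n := hTn ▸ Finset.card_erase_lt_of_mem htT
        obtain ⟨p, hp1, hp2, hp3, hp4⟩ := ih _ hlt (T.erase t) rfl
          (le_trans (Finset.card_le_card (Finset.erase_subset _ _)) hTk)
        refine ⟨p, hp1, ?_, hp3, hp4⟩
        intro m hm
        refine ⟨fun hcol => ?_, fun hncol => ?_⟩
        · obtain ⟨x, hx, hxa⟩ := (hp2 m hm).1 hcol
          exact ⟨x, Finset.mem_coe.mpr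
            (Finset.mem_of_mem_erase (Finset.mem_coe.mp hx)), hxa⟩
        · intro hmT
          have hmT' : m.1 ∈ T := Finset.mem_coe.mp hmT
          by_cases hmt : m.1 = t
          · have heta : (m.1, m.2.1, m.2.2) = m := rfl
            have hm' : (t, m.2.1, m.2.2) ∈ p.marksInternal := by
              rw [← hmt]; rw [heta]; exact hm
            rcases internal_master hp2 hm' hncol with h1 | h1 | ⟨x, hx, h2⟩
            · exact htX h1.to_reflTransGen
            · exact htY h1.to_reflTransGen
            · exact htT' x (Finset.mem_coe.mp hx) h2.to_reflTransGen
          · exact (hp2 m hm).2 hncol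
              (Finset.mem_coe.mpr (Finset.mem_erase.mpr ⟨hmt, hmT'⟩))
      · push_neg at hc
        have hstep : ∀ t ∈ T, Relation.ReflTransGen E t X ∨ Relation.ReflTransGen E t Y ∨
            ∃ x ∈ T.erase t, Relation.ReflTransGen E t x := by
          intro t ht
          by_cases h1 : Relation.ReflTransGen E t X
          · exact Or.inl h1
          by_cases h2 : Relation.ReflTransGen E t Y
          · exact Or.inr (Or.inl h2)
          obtain ⟨x, hx, hx2⟩ := hc t ht h1 h2
          exact Or.inr (Or.inr ⟨x, hx, hx2⟩)
        have hanc : ∀ t ∈ T, Relation.ReflTransGen E t X ∨ Relation.ReflTransGen E t Y := by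
          have haux : ∀ m (t : V), t ∈ T →
              (T.filter (fun z => Relation.TransGen E t z)).card = m →
              Relation.ReflTransGen E t X ∨ Relation.ReflTransGen E t Y := by
            intro m
            induction m using Nat.strong_induction_on with
            | _ m ihm =>
              intro t ht hcard
              rcases hstep t ht with h | h | ⟨x, hx, hxr⟩
              · exact Or.inl h
              · exact Or.inr h
              · obtain ⟨hxne, hxT⟩ := Finset.mem_erase.mp hx
                have htx : Relation.TransGen E t x := by
                  rcases Relation.reflTransGen_iff_eq_or_transGen.mp hxr with h' | h'
                  · exact absurd h' hxne
                  · exact h'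
                have hss : T.filter (fun z => Relation.TransGen E x z) ⊂
                    T.filter (fun z => Relation.TransGen E t z) := by
                  constructor
                  · intro z hz
                    simp only [Finset.mem_filter] at hz ⊢
                    exact ⟨hz.1, htx.trans hz.2⟩
                  · intro hsub
                    have hxmem : x ∈ T.filter (fun z => Relation.TransGen E t z) :=
                      Finset.mem_filter.mpr ⟨hxT, htx⟩
                    have := Finset.mem_filter.mp (hsub hxmem)
                    exact hE x this.2
                rcases ihm _ (hcard ▸ Finset.card_lt_card hss) x hxT rfl with h | h
                · exact Or.inl (hxr.trans h)
                · exact Or.inr (hxr.trans h)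
          intro t ht
          exact haux _ t ht rfl
        have hdconn : (ofDAG E).DConn (↑T) X Y := not_not.mp (hcov T hTk)
        obtain ⟨p, hpath, hdc⟩ := hdconn
        have hne : X ≠ Y := fun h => hXY (h ▸ Relation.ReflTransGen.refl)
        cases p with
        | nil => exact absurd rfl hne
        | cons hu hv h q =>
          have hfh : (MixedGraph.Walk.cons hu hv h q).firstHead = some hu := rfl
          have hfirst : hu = true := by
            by_contra hfalse
            simp only [Bool.not_eq_true] at hfalse
            subst hfalse
            rcases forward_master _ hdc hfh with h1 | ⟨x, hx, h2⟩
            · exact hXY h1.to_reflTransGen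
            · have hxT : x ∈ T := Finset.mem_coe.mp hx
              rcases hanc x hxT with hax | hax
              · exact hE X (h2.trans_left hax)
              · exact hXY (h2.to_reflTransGen.trans hax)
          obtain ⟨d, hd⟩ := lastHead_isSome _ hu hfh
          have hlast : d = true := by
            by_contra hdf
            simp only [Bool.not_eq_true] at hdf
            subst hdf
            rcases backward_master _ hdc hd with ⟨x, hx, h2⟩ | ⟨-, h2⟩
            · have hxT : x ∈ T := Finset.mem_coe.mp hx
              rcases hanc x hxT with hax | hax
              · exact hYX (h2.to_reflTransGen.trans hax)
              · exact hE Y (h2.trans_left hax)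
            · exact hYX h2.to_reflTransGen
          subst hfirst
          subst hlast
          exact ⟨_, hpath, hdc, hfh, hd⟩
  exact fun T hT => key T.card T rfl hT
end
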